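/- Let N ≥ 2 be an integer. If (α_1, …, α_N) ∈ DC_N(C, τ) for some C, τ > 0, then B(α_1, …, α_N) < +∞; that is, Moser's Diophantine condition implies the multivariable Brjuno condition. -/

import Mathlib

/-- `1, α 1, …, α N` are linearly independent over `ℚ`. -/
def RatIndep {N : ℕ} (α : Fin N → ℝ) : Prop :=
  ∀ (q : ℤ) (p : Fin N → ℤ),
    (q : ℝ) + ∑ i, (p i : ℝ) * α i = 0 → q = 0 ∧ ∀ i, p i = 0

/-- The Gauss map `G(α₁,…,α_N, w)`: with `α̂ᵢ = αᵢ` for `i ≠ w`, `α̂_w = 1`,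
and `aᵢ` the integer closest to `α̂ᵢ / α_w`, we set `α̃ᵢ = |aᵢ α_w − α̂ᵢ| / α_w`. -/
noncomputable def gaussStep {N : ℕ} (α : Fin N → ℝ) (w : Fin N) : Fin N → ℝ :=
  fun i =>
    let x : ℝ := (if i = w then (1 : ℝ) else α i) / α w
    |(round x : ℝ) - x|

/-- Moser's Diophantine class `DC_N(C, τ)`: tuples of rationally independent irrationals
in `(0,1)` with `max_j |q α_j − p_j| ≥ C / |q|^τ` for all integers `p_j` and `q ≠ 0`. -/
def DCN {N : ℕ} (C τ : ℝ) (α : Fin N → ℝ) : Prop :=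
  (∀ i, α i ∈ Set.Ioo (0 : ℝ) 1) ∧ RatIndep α ∧
  ∀ q : ℤ, q ≠ 0 → ∀ p : Fin N → ℤ,
    ∃ j, C / |(q : ℝ)| ^ τ ≤ |(q : ℝ) * α j - (p j : ℝ)|

/-- Iteration of the Gauss map along an infinite word `wbar`. -/
noncomputable def gaussIter {N : ℕ} (α : Fin N → ℝ) (wbar : ℕ → Fin N) : ℕ → Fin N → ℝ
  | 0 => α
  | n + 1 => gaussStep (gaussIter α wbar n) (wbar n)

/-- The Brjuno sum `Σₙ α⁽⁰⁾_{w(0)} ⋯ α⁽ⁿ⁻¹⁾_{w(n-1)} log(1/α⁽ⁿ⁾_{w(n)})` along a word. -/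
noncomputable def brjunoSum {N : ℕ} (α : Fin N → ℝ) (wbar : ℕ → Fin N) : ENNReal :=
  ∑' n : ℕ, ENNReal.ofReal
    ((∏ j ∈ Finset.range n, gaussIter α wbar j (wbar j)) *
      Real.log (1 / gaussIter α wbar n (wbar n)))

/-- The multivariable Brjuno function `B(α₁,…,α_N)`. -/
noncomputable def brjuno {N : ℕ} (α : Fin N → ℝ) : ENNReal :=
  ⨅ wbar : ℕ → Fin N, brjunoSum α wbar

/-! Follow the word that always divides by the largest coordinate. After `n` steps,
`(1, α) = βₙ · Bₙ (1, α⁽ⁿ⁾)` for an integer matrix `Bₙ` with entries at most `(2N+2)ⁿ / βₙ`,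
where `βₙ = α⁽⁰⁾_{w(0)} ⋯ α⁽ⁿ⁻¹⁾_{w(n-1)} ≤ 2¹⁻ⁿ`. The first column of `Bₙ` gives integers
`q, pⱼ` with `|q αⱼ - pⱼ| ≲ βₙ |Bₙ|² maxᵢ α⁽ⁿ⁾ᵢ`, so the Diophantine condition bounds
`log (1 / α⁽ⁿ⁾_{w(n)})` by `O(n + log (1 / βₙ))`. As `βₙ` decays geometrically and
`β log (1 / β) ≤ 2 √β`, the Brjuno series converges. -/

open Finset

section IntComb

variable {ι : Type*} [Fintype ι]

def IsBoundedIntComb (K x : ℝ) (v : ι → ℝ) : Prop :=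
  ∃ c : ι → ℤ, (∀ l, |(c l : ℝ)| ≤ K) ∧ x = ∑ l, c l * v l

theorem isBoundedIntComb_apply [DecidableEq ι] (v : ι → ℝ) (k : ι) :
    IsBoundedIntComb 1 (v k) v := by
  refine ⟨Pi.single k 1, fun l => ?_, ?_⟩
  · rcases eq_or_ne l k with rfl | h <;> simp [*]
  · simp [Pi.single_apply]

theorem isBoundedIntComb_of_eq_add [DecidableEq ι] {K x : ℝ} {v : ι → ℝ} {l₁ l₂ : ι}
    (hl : l₁ ≠ l₂) {r e : ℤ} (hr : |(r : ℝ)| ≤ K) (he : |(e : ℝ)| ≤ K)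
    (hx : x = r * v l₁ + e * v l₂) : IsBoundedIntComb K x v := by
  refine ⟨fun l => if l = l₁ then r else if l = l₂ then e else 0, fun l => ?_, ?_⟩
  · dsimp only
    split_ifs
    · exact hr
    · exact he
    · simpa using (abs_nonneg _).trans hr
  · rw [Fintype.sum_eq_add l₁ l₂ hl fun l hl' => by simp [hl'.1, hl'.2]]
    simp [hl.symm, hx]

theorem IsBoundedIntComb.mul {K x : ℝ} {v : ι → ℝ} (h : IsBoundedIntComb K x v) (t : ℝ) :
    IsBoundedIntComb K (t * x) (t • v) := by
  obtain ⟨c, hcK, rfl⟩ := h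
  refine ⟨c, hcK, ?_⟩
  simp only [mul_sum, Pi.smul_apply, smul_eq_mul]
  exact sum_congr rfl fun l _ => by ring

theorem IsBoundedIntComb.trans {K L x : ℝ} {v u : ι → ℝ} (hx : IsBoundedIntComb K x v)
    (hv : ∀ l, IsBoundedIntComb L (v l) u) :
    IsBoundedIntComb (Fintype.card ι * K * L) x u := by
  obtain ⟨c, hcK, rfl⟩ := hx
  choose d hdL hd using hv
  refine ⟨fun m => ∑ l, c l * d l m, fun m => ?_, ?_⟩
  · push_cast
    calc |∑ l, (c l : ℝ) * d l m| ≤ ∑ l, |(c l : ℝ)| * |(d l m : ℝ)| := by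
          simpa only [abs_mul] using abs_sum_le_sum_abs (fun l => (c l : ℝ) * d l m) univ
      _ ≤ ∑ _l : ι, K * L := sum_le_sum fun l _ =>
          mul_le_mul (hcK l) (hdL l m) (abs_nonneg _) ((abs_nonneg _).trans (hcK l))
      _ = Fintype.card ι * K * L := by simp [mul_assoc]
  · simp only [hd, mul_sum, Int.cast_sum, Int.cast_mul, sum_mul]
    rw [sum_comm]
    exact sum_congr rfl fun m _ => sum_congr rfl fun l _ => by ring

end IntComb

section GaussStep

open Function

variable {N : ℕ}

theorem gaussStep_apply (a : Fin N → ℝ) (w i : Fin N) :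
    gaussStep a w i = |round (update a w 1 i / a w) - update a w 1 i / a w| := by
  simp only [gaussStep, update_apply]

theorem gaussStep_le_half (a : Fin N → ℝ) (w i : Fin N) : gaussStep a w i ≤ 1 / 2 := by
  rw [gaussStep_apply, abs_sub_comm]
  exact abs_sub_round _

theorem gaussStep_nonneg (a : Fin N → ℝ) (w i : Fin N) : 0 ≤ gaussStep a w i :=
  abs_nonneg _

theorem exists_sign_gaussStep {a : Fin N → ℝ} {w : Fin N} (hw : a w ≠ 0) (i : Fin N) :
    ∃ ε : ℤ, (ε = 1 ∨ ε = -1) ∧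
      update a w 1 i = round (update a w 1 i / a w) * a w + ε * (a w * gaussStep a w i) := by
  rw [gaussStep_apply]
  set x := update a w 1 i / a w with hx
  have hax : update a w 1 i = x * a w := by rw [hx, div_mul_cancel₀ _ hw]
  rcases abs_choice ((round x : ℝ) - x) with h | h
  · exact ⟨-1, Or.inr rfl, by rw [h, hax]; push_cast; ring⟩
  · exact ⟨1, Or.inl rfl, by rw [h, hax]; push_cast; ring⟩

theorem abs_round_update_div_le {a : Fin N → ℝ} {w : Fin N} (hw : 0 < a w)
    (ha : ∀ i, |a i| ≤ 1) (i : Fin N) :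
    |(round (update a w 1 i / a w) : ℝ)| ≤ 2 / a w := by
  set x := update a w 1 i / a w
  have hx : |x| ≤ 1 / a w := by
    rw [abs_div, abs_of_pos hw]
    gcongr
    rw [update_apply]
    split_ifs <;> simp [ha]
  have hw1 : a w ≤ 1 := (le_abs_self _).trans (ha w)
  calc |(round x : ℝ)| = |((round x : ℝ) - x) + x| := by ring_nf
    _ ≤ |(round x : ℝ) - x| + |x| := abs_add_le _ _
    _ ≤ 1 / 2 + 1 / a w := add_le_add (by rw [abs_sub_comm]; exact abs_sub_round x) hx
    _ ≤ 2 / a w := by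
      rw [div_add_div _ _ two_ne_zero hw.ne', div_le_div_iff₀ (by positivity) hw]
      nlinarith

theorem RatIndep.ne_zero {a : Fin N → ℝ} (h : RatIndep a) (i : Fin N) : a i ≠ 0 := by
  intro hi
  simpa using (h 0 (Pi.single i 1) (by simp [Pi.single_apply, hi])).2 i

theorem ratIndep_gaussStep {a : Fin N → ℝ} (h : RatIndep a) (w : Fin N) :
    RatIndep (gaussStep a w) := by
  intro q p hqp
  choose ε hε hrel using exists_sign_gaussStep (h.ne_zero w)
  have hε0 : ∀ i, ε i ≠ 0 := fun i => by rcases hε i with hi | hi <;> simp [hi]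
  set r : Fin N → ℤ := fun i => round (update a w 1 i / a w)
  have hrel' : ∀ i, update a w 1 i = r i * a w + ε i * (a w * gaussStep a w i) := hrel
  set S := ∑ i, p i * ε i * r i with hS
  -- multiplying the relation by `a w` turns it into an integer relation among `1, a 1, …, a N`
  have hterm : ∀ i, a w * (p i * gaussStep a w i) = p i * ε i * a i - p i * ε i * r i * a w +
      if i = w then p w * ε w * (1 - a w) else 0 := by
    intro i
    have hεε : (ε i : ℝ) * ε i = 1 := by rcases hε i with hi | hi <;> simp [hi]
    have := hrel' i
    rw [update_apply] at this
    split_ifs at this ⊢ with hiw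
    · subst hiw
      linear_combination (-(p i * ε i) : ℝ) * this - p i * a i * gaussStep a i i * hεε
    · linear_combination (-(p i * ε i) : ℝ) * this - p i * a w * gaussStep a w i * hεε
  have hrelα := h (p w * ε w) (fun j => p j * ε j + if j = w then q - S - p w * ε w else 0) (by
    calc _ = a w * (q + ∑ i, p i * gaussStep a w i) := by
          push_cast
          simp only [mul_add, mul_sum, hterm, sum_add_distrib, sum_sub_distrib,
            sum_ite_eq', mem_univ, if_true, add_mul, ite_mul, zero_mul, hS]
          push_cast
          rw [← sum_mul]
          ring
      _ = 0 := by rw [hqp, mul_zero])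
  have hp : ∀ j, p j = 0 := by
    intro j
    rcases eq_or_ne j w with rfl | hj
    · exact (mul_eq_zero.mp hrelα.1).resolve_right (hε0 j)
    · simpa [hj, hε0 j] using hrelα.2 j
  refine ⟨?_, hp⟩
  simpa [hp, hS] using hrelα.2 w

def homCoords (a : Fin N → ℝ) : Option (Fin N) → ℝ := fun l => l.elim 1 a

theorem isBoundedIntComb_gaussStep {a : Fin N → ℝ} {w : Fin N} (hw : 0 < a w)
    (ha : ∀ i, |a i| ≤ 1) (k : Option (Fin N)) :
    IsBoundedIntComb (2 / a w) (homCoords a k) (a w • homCoords (gaussStep a w)) := by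
  have hone : |((1 : ℤ) : ℝ)| ≤ 2 / a w := by
    rw [Int.cast_one, abs_one, le_div_iff₀ hw]
    linarith [(le_abs_self _).trans (ha w)]
  have hsign : ∀ i, ∃ ε : ℤ, |(ε : ℝ)| ≤ 2 / a w ∧
      update a w 1 i = round (update a w 1 i / a w) * (a w * 1) + ε * (a w * gaussStep a w i) := by
    intro i
    obtain ⟨ε, hε, hrel⟩ := exists_sign_gaussStep hw.ne' i
    refine ⟨ε, ?_, by rw [mul_one]; exact hrel⟩
    rcases hε with rfl | rfl <;> simpa using hone
  have hround := abs_round_update_div_le hw ha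
  cases k with
  | none =>
    obtain ⟨ε, hε, hrel⟩ := hsign w
    refine isBoundedIntComb_of_eq_add (Option.some_ne_none w).symm (hround w) hε ?_
    simpa [homCoords] using hrel
  | some i =>
    rcases eq_or_ne i w with rfl | hiw
    · refine isBoundedIntComb_of_eq_add (Option.some_ne_none i).symm hone (e := 0)
        (by simpa using (abs_nonneg _).trans hone) ?_
      simp [homCoords]
    · obtain ⟨ε, hε, hrel⟩ := hsign i
      refine isBoundedIntComb_of_eq_add (Option.some_ne_none i).symm (hround i) hε ?_
      simpa [homCoords, hiw] using hrel

end GaussStep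

section Orbit

variable {N : ℕ} {α : Fin N → ℝ} (wbar : ℕ → Fin N)

noncomputable def gaussProd (α : Fin N → ℝ) (wbar : ℕ → Fin N) (n : ℕ) : ℝ :=
  ∏ j ∈ range n, gaussIter α wbar j (wbar j)

theorem ratIndep_gaussIter (h : RatIndep α) : ∀ n, RatIndep (gaussIter α wbar n)
  | 0 => h
  | n + 1 => ratIndep_gaussStep (ratIndep_gaussIter h n) (wbar n)

theorem gaussIter_pos (h0 : ∀ i, 0 < α i) (h : RatIndep α) : ∀ n i, 0 < gaussIter α wbar n i
  | 0, i => h0 i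
  | n + 1, i => (gaussStep_nonneg _ _ _).lt_of_ne' ((ratIndep_gaussIter wbar h (n + 1)).ne_zero i)

theorem gaussIter_nonneg (h0 : ∀ i, 0 ≤ α i) : ∀ n i, 0 ≤ gaussIter α wbar n i
  | 0, i => h0 i
  | _ + 1, _ => gaussStep_nonneg _ _ _

theorem gaussIter_le_one (h1 : ∀ i, α i ≤ 1) : ∀ n i, gaussIter α wbar n i ≤ 1
  | 0, i => h1 i
  | _ + 1, _ => (gaussStep_le_half _ _ _).trans (by norm_num)

theorem gaussProd_pos (h0 : ∀ i, 0 < α i) (h : RatIndep α) (n : ℕ) : 0 < gaussProd α wbar n :=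
  prod_pos fun j _ => gaussIter_pos wbar h0 h j _

theorem gaussProd_le_one (h01 : ∀ i, α i ∈ Set.Icc 0 1) (n : ℕ) : gaussProd α wbar n ≤ 1 :=
  prod_le_one (fun j _ => gaussIter_nonneg wbar (fun i => (h01 i).1) j _)
    fun j _ => gaussIter_le_one wbar (fun i => (h01 i).2) j _

theorem gaussProd_le (h01 : ∀ i, α i ∈ Set.Icc 0 1) (n : ℕ) :
    gaussProd α wbar n ≤ 2 * (1 / 2) ^ n := by
  cases n with
  | zero => norm_num [gaussProd]
  | succ n =>
    rw [gaussProd, prod_range_succ']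
    calc (∏ k ∈ range n, gaussIter α wbar (k + 1) (wbar (k + 1))) * α (wbar 0)
        ≤ (∏ _k ∈ range n, (1 / 2 : ℝ)) * 1 := by
          refine mul_le_mul (prod_le_prod (fun k _ => gaussStep_nonneg _ _ _)
            fun k _ => gaussStep_le_half _ _ _) (h01 _).2 (h01 _).1 (by positivity)
      _ = 2 * (1 / 2) ^ (n + 1) := by rw [prod_const, card_range]; ring

theorem isBoundedIntComb_gaussIter (h01 : ∀ i, α i ∈ Set.Ioo 0 1) (h : RatIndep α) (n : ℕ)
    (k : Option (Fin N)) :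
    IsBoundedIntComb ((2 * (N + 1)) ^ n / gaussProd α wbar n) (homCoords α k)
      (gaussProd α wbar n • homCoords (gaussIter α wbar n)) := by
  induction n generalizing k with
  | zero => simpa [gaussProd, gaussIter] using isBoundedIntComb_apply (homCoords α) k
  | succ n ih =>
    have hw := gaussIter_pos wbar (fun i => (h01 i).1) h n (wbar n)
    have ha : ∀ i, |gaussIter α wbar n i| ≤ 1 := fun i => by
      rw [abs_of_pos (gaussIter_pos wbar (fun i => (h01 i).1) h n i)]
      exact gaussIter_le_one wbar (fun i => (h01 i).2.le) n i
    have hβ := gaussProd_pos wbar (fun i => (h01 i).1) h n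
    have := (ih k).trans fun l => (isBoundedIntComb_gaussStep hw ha l).mul (gaussProd α wbar n)
    convert this using 1
    · rw [Fintype.card_option, Fintype.card_fin, gaussProd, prod_range_succ, ← gaussProd]
      field_simp
      push_cast
      ring
    · rw [smul_smul, gaussProd, prod_range_succ]
      rfl

end Orbit

section Diophantine

variable {N : ℕ}

theorem exists_int_approx_of_isBoundedIntComb {K β M : ℝ} {α a : Fin N → ℝ} (hβ : 0 ≤ β)
    (haM : ∀ i, |a i| ≤ M) (h : ∀ k, IsBoundedIntComb K (homCoords α k) (β • homCoords a)) :
    ∃ (q : ℤ) (p : Fin N → ℤ), |(q : ℝ)| ≤ K ∧ (q = 0 → 1 ≤ β * (N * K * M)) ∧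
      ∀ j, |q * α j - p j| ≤ 2 * N * β * K ^ 2 * M := by
  choose c hcK hc using h
  have hK0 : 0 ≤ K := (abs_nonneg _).trans (hcK none none)
  set r : Option (Fin N) → ℝ := fun k => ∑ j, (c k (some j) : ℝ) * a j
  have hsplit : ∀ k, homCoords α k = β * (c k none + r k) := by
    intro k
    rw [hc k, Fintype.sum_option, mul_add, mul_sum]
    simp only [homCoords, Pi.smul_apply, smul_eq_mul, Option.elim_none, Option.elim_some]
    ring_nf
  have hr : ∀ k, |r k| ≤ N * K * M := by
    intro k
    calc |r k| ≤ ∑ j, |(c k (some j) : ℝ)| * |a j| := by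
          simpa only [abs_mul] using abs_sum_le_sum_abs (fun j => (c k (some j) : ℝ) * a j) univ
      _ ≤ ∑ _j : Fin N, K * M :=
          sum_le_sum fun j _ => mul_le_mul (hcK k _) (haM j) (abs_nonneg _) hK0
      _ = N * K * M := by simp [mul_assoc]
  have hone : 1 = β * (c none none + r none) := hsplit none
  refine ⟨c none none, fun j => c (some j) none, hcK none none, fun hq => ?_, fun j => ?_⟩
  · rw [hq, Int.cast_zero, zero_add] at hone
    rw [hone]
    exact mul_le_mul_of_nonneg_left ((le_abs_self _).trans (hr none)) hβ
  · have hαj : α j = β * (c (some j) none + r (some j)) := hsplit (some j)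
    calc |(c none none : ℝ) * α j - c (some j) none|
        = β * |c none none * r (some j) - c (some j) none * r none| := by
          rw [← abs_of_nonneg hβ, ← abs_mul]
          congr 1
          linear_combination (c none none : ℝ) * hαj - (c (some j) none : ℝ) * hone
      _ ≤ β * (K * (N * K * M) + K * (N * K * M)) := by
          gcongr
          refine (abs_sub _ _).trans (add_le_add ?_ ?_) <;> rw [abs_mul] <;>
            exact mul_le_mul (hcK _ _) (hr _) (abs_nonneg _) hK0
      _ = 2 * N * β * K ^ 2 * M := by ring

theorem DCN.le_of_isBoundedIntComb {C τ K β M : ℝ} {α a : Fin N → ℝ} (hα : DCN C τ α)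
    (hC : 0 ≤ C) (hτ : 0 ≤ τ) (hK : 1 ≤ K) (hβ : 0 ≤ β) (haM : ∀ i, |a i| ≤ M)
    (h : ∀ k, IsBoundedIntComb K (homCoords α k) (β • homCoords a)) :
    min C 1 ≤ 2 * N * β * K ^ 2 * K ^ τ * M := by
  obtain ⟨q, p, hqK, hq0, happrox⟩ := exists_int_approx_of_isBoundedIntComb hβ haM h
  have hKτ : 1 ≤ K ^ τ := Real.one_le_rpow hK hτ
  by_cases hq : q = 0
  · have hβNKM := hq0 hq
    have hβNM : 0 ≤ β * N * M := by nlinarith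
    calc min C 1 ≤ 1 := min_le_right _ _
      _ ≤ β * N * M * K := by linarith
      _ ≤ β * N * M * (2 * K ^ 2 * K ^ τ) := by gcongr; nlinarith
      _ = 2 * N * β * K ^ 2 * K ^ τ * M := by ring
  · obtain ⟨j, hj⟩ := hα.2.2 q hq p
    calc min C 1 ≤ C := min_le_left _ _
      _ = C / K ^ τ * K ^ τ := by field_simp
      _ ≤ C / |(q : ℝ)| ^ τ * K ^ τ := by gcongr
      _ ≤ |(q : ℝ) * α j - p j| * K ^ τ := by gcongr
      _ ≤ 2 * N * β * K ^ 2 * M * K ^ τ := by gcongr; exact happrox j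
      _ = 2 * N * β * K ^ 2 * K ^ τ * M := by ring

end Diophantine

section Analysis

open Real

theorem mul_log_one_div_le_two_sqrt {x : ℝ} (hx : 0 ≤ x) : x * log (1 / x) ≤ 2 * √x := by
  rcases hx.eq_or_lt with rfl | hx
  · simp
  calc x * log (1 / x) = 2 * x * log √(1 / x) := by rw [log_sqrt (by positivity)]; ring
    _ ≤ 2 * x * √(1 / x) := by gcongr; exact log_le_self (sqrt_nonneg _)
    _ = 2 * √x := by rw [one_div, sqrt_inv, mul_assoc, ← div_eq_mul_inv, div_sqrt]

theorem log_one_div_le_of_le_mul {m c β P M τ : ℝ} (hm : 0 < m) (hc : 0 < c) (hβ : 0 < β)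
    (hP : 0 < P) (hM : 0 < M) (h : m ≤ c * β * (P / β) ^ 2 * (P / β) ^ τ * M) :
    log (1 / M) ≤ log (c / m) + (τ + 2) * log P + (τ + 1) * log (1 / β) := by
  have hlog := log_le_log hm h
  rw [log_mul (by positivity) hM.ne', log_mul (by positivity) (by positivity),
    log_mul (by positivity) (by positivity), log_mul hc.ne' hβ.ne', log_rpow (by positivity),
    log_pow, log_div hP.ne' hβ.ne'] at hlog
  rw [one_div, log_inv, one_div, log_inv, log_div hc.ne' hm.ne']
  push_cast at hlog
  linarith

theorem mul_add_mul_log_le_of_le {β A B D r : ℝ} (n : ℕ) (hβ : 0 ≤ β) (hA : 0 ≤ A) (hB : 0 ≤ B)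
    (hD : 0 ≤ D) (hr0 : 0 ≤ r) (hr1 : r ≤ 1) (hβr : β ≤ 2 * (r ^ n) ^ 2) :
    β * (A + B * n) + D * (β * log (1 / β)) ≤ (2 * A + 2 * √2 * D + 2 * B * n) * r ^ n := by
  have hrn : 0 ≤ r ^ n := pow_nonneg hr0 n
  have hβr' : β ≤ 2 * r ^ n := hβr.trans (by nlinarith [pow_le_one₀ hr0 hr1 (n := n)])
  have hsqrt : √β ≤ √2 * r ^ n := by
    calc √β ≤ √(2 * (r ^ n) ^ 2) := sqrt_le_sqrt hβr
      _ = √2 * r ^ n := by rw [sqrt_mul zero_le_two, sqrt_sq hrn]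
  calc β * (A + B * n) + D * (β * log (1 / β)) ≤ 2 * r ^ n * (A + B * n) + D * (2 * (√2 * r ^ n)) :=
        add_le_add (by gcongr) (mul_le_mul_of_nonneg_left
          ((mul_log_one_div_le_two_sqrt hβ).trans (by gcongr)) hD)
    _ = (2 * A + 2 * √2 * D + 2 * B * n) * r ^ n := by ring

theorem tsum_ofReal_lt_top_of_le_geometric {f : ℕ → ℝ} {a b r : ℝ} (ha : 0 ≤ a) (hb : 0 ≤ b)
    (hr0 : 0 ≤ r) (hr1 : r < 1) (hf : ∀ n, f n ≤ (a + b * n) * r ^ n) :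
    ∑' n, ENNReal.ofReal (f n) < ⊤ := by
  have hs : Summable fun n : ℕ => (a + b * n) * r ^ n := by
    have hgeom := summable_geometric_of_lt_one hr0 hr1
    have hlin := summable_pow_mul_geometric_of_norm_lt_one 1 (r := r)
      (by rwa [Real.norm_of_nonneg hr0])
    simpa only [add_mul, mul_assoc, pow_one] using (hgeom.mul_left a).add (hlin.mul_left b)
  calc ∑' n, ENNReal.ofReal (f n) ≤ ∑' n : ℕ, ENNReal.ofReal ((a + b * n) * r ^ n) :=
        ENNReal.tsum_le_tsum fun n => ENNReal.ofReal_le_ofReal (hf n)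
    _ = ENNReal.ofReal (∑' n : ℕ, (a + b * n) * r ^ n) :=
        (ENNReal.ofReal_tsum_of_nonneg (fun n => by positivity) hs).symm
    _ < ⊤ := ENNReal.ofReal_lt_top

end Analysis

section Brjuno

open Real

variable {N : ℕ} {C τ : ℝ} {α : Fin N → ℝ} {wbar : ℕ → Fin N}

theorem log_one_div_gaussIter_le (hα : DCN C τ α) (hC : 0 < C) (hτ : 0 ≤ τ)
    (hmax : ∀ n i, gaussIter α wbar n i ≤ gaussIter α wbar n (wbar n)) (n : ℕ) :
    log (1 / gaussIter α wbar n (wbar n)) ≤ log (2 * N / min C 1) +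
      (τ + 2) * log (2 * (N + 1)) * n + (τ + 1) * log (1 / gaussProd α wbar n) := by
  have h0 : ∀ i, 0 < α i := fun i => (hα.1 i).1
  have hβ := gaussProd_pos wbar h0 hα.2.1 n
  have hpos := gaussIter_pos wbar h0 hα.2.1 n
  have hN : (0 : ℝ) < N := Nat.cast_pos.mpr (Fin.pos (wbar 0))
  have hK : 1 ≤ (2 * (N + 1) : ℝ) ^ n / gaussProd α wbar n := by
    rw [le_div_iff₀ hβ, one_mul]
    exact (gaussProd_le_one wbar (fun i => Set.Ioo_subset_Icc_self (hα.1 i)) n).trans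
      (one_le_pow₀ (by linarith))
  have hbound := hα.le_of_isBoundedIntComb hC.le hτ hK hβ.le
    (fun i => (abs_of_pos (hpos i)).trans_le (hmax n i))
    (isBoundedIntComb_gaussIter wbar hα.1 hα.2.1 n)
  have hlog := log_one_div_le_of_le_mul (lt_min hC one_pos) (by positivity) hβ (by positivity)
    (hpos (wbar n)) hbound
  rw [log_pow] at hlog
  linarith

theorem brjunoSum_lt_top_of_isMax (hα : DCN C τ α) (hC : 0 < C) (hτ : 0 ≤ τ)
    (hmax : ∀ n i, gaussIter α wbar n i ≤ gaussIter α wbar n (wbar n)) :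
    brjunoSum α wbar < ⊤ := by
  have hN : (1 : ℝ) ≤ N := Nat.one_le_cast.mpr (Fin.pos (wbar 0))
  set A := log (2 * N / min C 1)
  set B := (τ + 2) * log (2 * (N + 1))
  have hA : 0 ≤ A := log_nonneg <| by
    rw [le_div_iff₀ (lt_min hC one_pos)]
    linarith [min_le_right C 1]
  have hB : 0 ≤ B := mul_nonneg (by linarith) (log_nonneg (by linarith))
  set r := √(1 / 2)
  have hr0 : 0 ≤ r := sqrt_nonneg _
  have hr1 : r < 1 := by rw [sqrt_lt' one_pos]; norm_num
  have hr2 : r ^ 2 = 1 / 2 := sq_sqrt (by norm_num)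
  refine tsum_ofReal_lt_top_of_le_geometric (a := 2 * A + 2 * √2 * (τ + 1)) (b := 2 * B)
    (by positivity) (by positivity) hr0 hr1 fun n => ?_
  have hβ := gaussProd_pos wbar (fun i => (hα.1 i).1) hα.2.1 n
  calc gaussProd α wbar n * log (1 / gaussIter α wbar n (wbar n))
      ≤ gaussProd α wbar n * (A + B * n + (τ + 1) * log (1 / gaussProd α wbar n)) :=
        mul_le_mul_of_nonneg_left (log_one_div_gaussIter_le hα hC hτ hmax n) hβ.le
    _ = gaussProd α wbar n * (A + B * n) +
          (τ + 1) * (gaussProd α wbar n * log (1 / gaussProd α wbar n)) := by ring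
    _ ≤ _ := by
        refine mul_add_mul_log_le_of_le (D := τ + 1) n hβ.le hA hB (by linarith) hr0 hr1.le ?_
        rw [← pow_mul, mul_comm n 2, pow_mul, hr2]
        exact gaussProd_le wbar (fun i => Set.Ioo_subset_Icc_self (hα.1 i)) n

theorem exists_isMax_word [Nonempty (Fin N)] (α : Fin N → ℝ) :
    ∃ wbar : ℕ → Fin N, ∀ n i, gaussIter α wbar n i ≤ gaussIter α wbar n (wbar n) := by
  choose m hm using fun a : Fin N → ℝ => Finite.exists_max a
  let orbit : ℕ → Fin N → ℝ := fun n => Nat.rec α (fun _ a => gaussStep a (m a)) n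
  have horbit : ∀ n, gaussIter α (fun k => m (orbit k)) n = orbit n := by
    intro n
    induction n with
    | zero => rfl
    | succ n ih => simp only [gaussIter, ih]; rfl
  exact ⟨fun k => m (orbit k), fun n i => by rw [horbit]; exact hm _ i⟩

end Brjuno

theorem diophantine_implies_brjuno_general (N : ℕ) (C τ : ℝ) (hC : 0 < C)
    (hτ : 0 < τ) (α : Fin N → ℝ) (hα : DCN C τ α) :
    brjuno α < ⊤ := by
  have : Nonempty (Fin N) := ⟨(hα.2.2 1 one_ne_zero 0).choose⟩
  obtain ⟨wbar, hmax⟩ := exists_isMax_word α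
  exact (iInf_le _ wbar).trans_lt (brjunoSum_lt_top_of_isMax hα hC hτ.le hmax)

/-- Moser's Diophantine condition implies the multivariable Brjuno condition:
if `(α₁,…,α_N) ∈ DC_N(C, τ)` for some `C, τ > 0` then `B(α₁,…,α_N) < +∞`. -/
theorem diophantine_implies_brjuno (N : ℕ) (hN : 2 ≤ N) (C τ : ℝ) (hC : 0 < C)
    (hτ : 0 < τ) (α : Fin N → ℝ) (hα : DCN C τ α) :
    brjuno α < ⊤ :=
  diophantine_implies_brjuno_general N C τ hC hτ α hα
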